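/- Let μ > 0, a > 0, ρ₀ > 0, and let h be as defined on (−arctan a, arctan a). Then the function ρ(θ,ψ) = ρ₀·e^{μθ + h(ψ)} satisfies the equiangular partial differential equation ρ_θ(θ,ψ)² + ρ_ψ(θ,ψ)² cos²ψ = ρ(θ,ψ)² cos²ψ · μ²(a² + 1) for all θ ∈ ℝ and all ψ ∈ (−arctan a, arctan a); that is, ρ satisfies ρ_θ² + ρ_ψ² cos²ψ = ρ² cos²ψ tan²β with tan²β = μ²(a² + 1). -/

import Mathlib

open Real

/-- The antiderivative `h(ψ) = μ·[√(a²+1)·arctan(√(a²+1)·tan ψ / √(a² − tan²ψ))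
− arctan(tan ψ / √(a² − tan²ψ))]`. -/
noncomputable def hFun (μ a ψ : ℝ) : ℝ :=
  μ * (Real.sqrt (a ^ 2 + 1) *
        Real.arctan (Real.sqrt (a ^ 2 + 1) * Real.tan ψ / Real.sqrt (a ^ 2 - Real.tan ψ ^ 2))
      - Real.arctan (Real.tan ψ / Real.sqrt (a ^ 2 - Real.tan ψ ^ 2)))

/-!
`h(ψ) = μ G(tan ψ)`, where `G(t) = √(a²+1) arctan(√(a²+1) t / √(a²-t²)) - arctan(t / √(a²-t²))`
is an antiderivative of `√(a²-t²) / (1+t²)` on `t² < a²`. Since `tan' = 1 + tan²`, this gives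
`h'(ψ) = μ √(a² - tan²ψ)`. As `ρ_θ = μρ` and `ρ_ψ = h'ρ`, the equation reduces to the identity
`1 + (a² - tan²ψ) cos²ψ = (a² + 1) cos²ψ`.
-/

namespace Real

lemma mem_Ioo_neg_pi_div_two_of_mem_Ioo_arctan {a ψ : ℝ}
    (hψ : ψ ∈ Set.Ioo (-arctan a) (arctan a)) : ψ ∈ Set.Ioo (-(π / 2)) (π / 2) :=
  ⟨by linarith [hψ.1, arctan_lt_pi_div_two a], hψ.2.trans (arctan_lt_pi_div_two a)⟩

lemma tan_sq_lt_sq_of_mem_Ioo_arctan {a ψ : ℝ} (hψ : ψ ∈ Set.Ioo (-arctan a) (arctan a)) :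
    tan ψ ^ 2 < a ^ 2 := by
  obtain ⟨hlo, hhi⟩ := mem_Ioo_neg_pi_div_two_of_mem_Ioo_arctan hψ
  have harctan : arctan (tan ψ) = ψ := arctan_tan hlo hhi
  refine sq_lt_sq' ?_ ?_
  · rw [← arctan_lt_arctan_iff, arctan_neg, harctan]; exact hψ.1
  · rw [← arctan_lt_arctan_iff, harctan]; exact hψ.2

lemma hasDerivAt_tan_one_add_sq {x : ℝ} (hx : cos x ≠ 0) :
    HasDerivAt tan (1 + tan x ^ 2) x := by
  convert hasDerivAt_tan hx using 1
  rw [one_div, ← inv_one_add_tan_sq hx, inv_inv]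

lemma one_add_sub_tan_sq_mul_cos_sq (a : ℝ) {x : ℝ} (hx : cos x ≠ 0) :
    1 + (a ^ 2 - tan x ^ 2) * cos x ^ 2 = (a ^ 2 + 1) * cos x ^ 2 := by
  linear_combination (-(tan x * cos x + sin x)) * tan_mul_cos hx - sin_sq_add_cos_sq x

section SqrtSqSubSq

variable {a t : ℝ}

lemma hasDerivAt_div_sqrt_sq_sub_sq (ht : t ^ 2 < a ^ 2) :
    HasDerivAt (fun x => x / √(a ^ 2 - x ^ 2)) (a ^ 2 / √(a ^ 2 - t ^ 2) ^ 3) t := by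
  have hpos : 0 < a ^ 2 - t ^ 2 := sub_pos.mpr ht
  have hs : 0 < √(a ^ 2 - t ^ 2) := sqrt_pos.mpr hpos
  have hsqrt : HasDerivAt (fun x => √(a ^ 2 - x ^ 2)) (-t / √(a ^ 2 - t ^ 2)) t := by
    convert (((hasDerivAt_id t).pow 2).const_sub (a ^ 2)).sqrt hpos.ne' using 1
    · simp
    · simp; field_simp
  refine ((hasDerivAt_id' t).div hsqrt hs.ne').congr_deriv ?_
  field_simp
  linear_combination sq_sqrt hpos.le

/-- With `s = √(a² - t²)`, the factor `a² + (k² - 1) t²` is `s² + k² t²`. -/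
lemma hasDerivAt_arctan_mul_div_sqrt_sq_sub_sq (k : ℝ) (ht : t ^ 2 < a ^ 2) :
    HasDerivAt (fun x => arctan (k * x / √(a ^ 2 - x ^ 2)))
      (k * a ^ 2 / (√(a ^ 2 - t ^ 2) * (a ^ 2 + (k ^ 2 - 1) * t ^ 2))) t := by
  have hpos : 0 < a ^ 2 - t ^ 2 := sub_pos.mpr ht
  have hs : 0 < √(a ^ 2 - t ^ 2) := sqrt_pos.mpr hpos
  have hden : 0 < a ^ 2 + (k ^ 2 - 1) * t ^ 2 := by nlinarith [sq_nonneg (k * t)]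
  simp_rw [mul_div_assoc]
  refine (((hasDerivAt_div_sqrt_sq_sub_sq ht).const_mul k).arctan).congr_deriv ?_
  field_simp
  rw [sq_sqrt hpos.le, eq_div_iff (by linarith)]
  ring

lemma hasDerivAt_sqrt_mul_arctan_sub_arctan (ht : t ^ 2 < a ^ 2) :
    HasDerivAt (fun x => √(a ^ 2 + 1) * arctan (√(a ^ 2 + 1) * x / √(a ^ 2 - x ^ 2))
        - arctan (x / √(a ^ 2 - x ^ 2)))
      (√(a ^ 2 - t ^ 2) / (1 + t ^ 2)) t := by
  have ha : a ≠ 0 := by rintro rfl; nlinarith [sq_nonneg t]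
  have hpos : 0 < a ^ 2 - t ^ 2 := sub_pos.mpr ht
  have hs : 0 < √(a ^ 2 - t ^ 2) := sqrt_pos.mpr hpos
  have hc : √(a ^ 2 + 1) ^ 2 = a ^ 2 + 1 := sq_sqrt (by positivity)
  have harctan := hasDerivAt_arctan_mul_div_sqrt_sq_sub_sq 1 ht
  simp only [one_mul] at harctan
  refine (((hasDerivAt_arctan_mul_div_sqrt_sq_sub_sq _ ht).const_mul _).sub harctan).congr_deriv ?_
  rw [hc, one_pow, sub_self, zero_mul, add_zero, add_sub_cancel_right,
    ← mul_one_add (a ^ 2), ← mul_assoc]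
  field_simp
  linear_combination hc - sq_sqrt hpos.le

end SqrtSqSubSq

end Real

lemma hasDerivAt_const_mul_exp {f : ℝ → ℝ} {f' x : ℝ} (c : ℝ) (hf : HasDerivAt f f' x) :
    HasDerivAt (fun y => c * exp (f y)) (c * exp (f x) * f') x := by
  simpa only [mul_assoc] using hf.exp.const_mul c

lemma hasDerivAt_hFun (μ a : ℝ) {ψ : ℝ} (hcos : cos ψ ≠ 0) (hψ : tan ψ ^ 2 < a ^ 2) :
    HasDerivAt (hFun μ a) (μ * √(a ^ 2 - tan ψ ^ 2)) ψ := by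
  refine (((hasDerivAt_sqrt_mul_arctan_sub_arctan hψ).comp ψ
    (hasDerivAt_tan_one_add_sq hcos)).const_mul μ).congr_deriv ?_
  field_simp

theorem hFun_solves_pde (μ a ρ₀ : ℝ) :
    ∀ θ : ℝ, ∀ ψ ∈ Set.Ioo (-Real.arctan a) (Real.arctan a),
      (deriv (fun t => ρ₀ * Real.exp (μ * t + hFun μ a ψ)) θ) ^ 2
        + (deriv (fun s => ρ₀ * Real.exp (μ * θ + hFun μ a s)) ψ) ^ 2 * Real.cos ψ ^ 2
      = (ρ₀ * Real.exp (μ * θ + hFun μ a ψ)) ^ 2 * Real.cos ψ ^ 2 * (μ ^ 2 * (a ^ 2 + 1)) := by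
  intro θ ψ hψ
  have hcos : cos ψ ≠ 0 :=
    (cos_pos_of_mem_Ioo (mem_Ioo_neg_pi_div_two_of_mem_Ioo_arctan hψ)).ne'
  have htan : tan ψ ^ 2 < a ^ 2 := tan_sq_lt_sq_of_mem_Ioo_arctan hψ
  have hρθ := (hasDerivAt_const_mul_exp ρ₀
    (((hasDerivAt_id' θ).const_mul μ).add_const (hFun μ a ψ))).deriv
  have hρψ := (hasDerivAt_const_mul_exp ρ₀
    ((hasDerivAt_hFun μ a hcos htan).const_add (μ * θ))).deriv
  rw [hρθ, hρψ, mul_one]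
  set ρ := ρ₀ * exp (μ * θ + hFun μ a ψ)
  linear_combination (ρ * μ) ^ 2 * one_add_sub_tan_sq_mul_cos_sq a hcos
    + (ρ * μ * cos ψ) ^ 2 * sq_sqrt (sub_pos.mpr htan).le
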